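/- A minimal counterexample to the SOCDC conjecture has no non-trivial edge cut of size 3. That is, if G is a 2-connected simple graph, G ∉ {K_4, K_6}, G has no SOCDC, and every 2-connected simple graph H ∉ {K_4, K_6} with |V(H)| + |E(H)| < |V(G)| + |E(G)| has an SOCDC, then every edge cut of G of size 3 isolates a single vertex. -/

import Mathlib

open SimpleGraph

/-- The list of arcs of a cyclically-read list of vertices:
`[(l₀,l₁), (l₁,l₂), …, (lₙ₋₁,l₀)]`. -/
def cycleArcs {V : Type*} (l : List V) : List (V × V) := l.zip (l.rotate 1)

/-- `l` represents a directed cycle of the symmetric orientation of `G`: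
a cyclic sequence of at least three pairwise distinct vertices with consecutive
vertices adjacent (cyclically). -/
def IsDirCycle {V : Type*} (G : SimpleGraph V) (l : List V) : Prop :=
  3 ≤ l.length ∧ l.Nodup ∧ ∀ p ∈ cycleArcs l, G.Adj p.1 p.2

/-- An oriented cycle double cover of `G` : a collection of directed cycles of the
symmetric orientation of `G` such that each arc `(u,v)` (with `u ~ v` in `G`) lies
in exactly one of the cycles. -/
def IsOCDC {V : Type*} (G : SimpleGraph V) (C : Finset (List V)) : Prop :=
  (∀ l ∈ C, IsDirCycle G l) ∧
    ∀ u v : V, G.Adj u v → ∃! l : List V, l ∈ C ∧ (u, v) ∈ cycleArcs l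

/-- `G` (a graph with vertex set of size `n`) has a small oriented cycle double cover:
an OCDC with at most `n - 1` directed cycles. -/
def HasSOCDC {V : Type*} (G : SimpleGraph V) : Prop :=
  ∃ C : Finset (List V), IsOCDC G C ∧ C.card ≤ Nat.card V - 1

/-- `l` represents a directed path of the symmetric orientation of `G`. -/
def IsDirPath {V : Type*} (G : SimpleGraph V) (l : List V) : Prop :=
  l ≠ [] ∧ l.Nodup ∧ l.Chain' G.Adj

/-- An oriented perfect path double cover of `G`: a collection of directed paths of the
symmetric orientation of `G` such that each arc lies in exactly one path, and every
vertex occurs exactly once as the start and exactly once as the end of a path. -/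
def IsOPPDC {V : Type*} (G : SimpleGraph V) (P : Finset (List V)) : Prop :=
  (∀ l ∈ P, IsDirPath G l) ∧
    (∀ u v : V, G.Adj u v → ∃! l : List V, l ∈ P ∧ (u, v) ∈ l.zip l.tail) ∧
    (∀ v : V, ∃! l : List V, l ∈ P ∧ l.head? = some v) ∧
    (∀ v : V, ∃! l : List V, l ∈ P ∧ l.getLast? = some v)

/-- `G` is `2`-connected: it has at least three vertices and deleting any single
vertex leaves a connected graph. -/
def TwoConnected {V : Type*} (G : SimpleGraph V) : Prop :=
  3 ≤ Nat.card V ∧ ∀ v : V, (G.induce {u | u ≠ v}).Connected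

/-- `G` is a minimal counterexample to the SOCDC conjecture: `G` is a `2`-connected
graph other than `K₄` and `K₆` with no SOCDC, while every `2`-connected graph other
than `K₄` and `K₆` with smaller `|V| + |E|` has an SOCDC. -/
def MinimalCounterexample {V : Type} (G : SimpleGraph V) : Prop :=
  TwoConnected G ∧
    ¬ Nonempty (G ≃g (⊤ : SimpleGraph (Fin 4))) ∧
    ¬ Nonempty (G ≃g (⊤ : SimpleGraph (Fin 6))) ∧
    ¬ HasSOCDC G ∧
    ∀ (W : Type) [Finite W] (H : SimpleGraph W),
      TwoConnected H →
      ¬ Nonempty (H ≃g (⊤ : SimpleGraph (Fin 4))) →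
      ¬ Nonempty (H ≃g (⊤ : SimpleGraph (Fin 6))) →
      Nat.card W + Nat.card H.edgeSet < Nat.card V + Nat.card G.edgeSet →
      HasSOCDC H

/-- The edge cut determined by a set `S` of vertices: the set of edges of `G` having
one endpoint in `S` and the other outside `S`. -/
def crossingEdges {V : Type*} (G : SimpleGraph V) (S : Set V) : Set (Sym2 V) :=
  {e | e ∈ G.edgeSet ∧ ∃ x y : V, e = s(x, y) ∧ x ∈ S ∧ y ∉ S}

/-!
Let exactly three edges `c i o i` (`c i ∈ S`, `o i ∉ S`) cross a cut `(S, Sᶜ)` with both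
sides of size at least two. Contracting `Sᶜ` to the single vertex `o 0` gives a smaller
2-connected graph. It is not `K₆`, since the new vertex has degree at most three, so by
minimality it has an SOCDC, or it is `K₄` and has an OCDC with four cycles, in which case the
`c i` are distinct. The cycles of this cover through the new vertex, with that vertex deleted,
are directed paths inside `S` between attachment vertices; choosing one of them for each `i` (or
the one-vertex path when two attachments coincide) gives three paths from `c i` to `c (σ i)` for
a cyclic permutation `σ`, and the remaining cycles lie inside `S` and number at most `|S| - 2`.
After reversing one side if necessary, the paths of the two sides are joined through the cut
edges into three directed cycles, and with the cycles inside `S` and `Sᶜ` they form an OCDC of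
`G` with at most `|V| - 1` cycles, which a counterexample does not have.
-/

namespace List

variable {α : Type*}

@[simp]
theorem consecutivePairs_singleton (a : α) : [a].consecutivePairs = [] := rfl

theorem mem_consecutivePairs_cons {a : α} {l : List α} {p : α × α} :
    p ∈ (a :: l).consecutivePairs ↔
      (p.1 = a ∧ l.head? = some p.2) ∨ p ∈ l.consecutivePairs := by
  rcases l with _ | ⟨b, l⟩
  · simp
  · simp only [consecutivePairs, tail_cons, zip_cons_cons, mem_cons, head?_cons, Option.some.injEq]
    constructor
    · rintro (rfl | h) <;> simp_all
    · rintro (⟨h1, rfl⟩ | h) <;> simp_all [Prod.ext_iff]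

theorem mem_consecutivePairs_append {u v : α} {xs ys : List α} :
    (u, v) ∈ (xs ++ ys).consecutivePairs ↔ (u, v) ∈ xs.consecutivePairs ∨
      (xs.getLast? = some u ∧ ys.head? = some v) ∨ (u, v) ∈ ys.consecutivePairs := by
  induction xs with
  | nil => simp
  | cons a t ih =>
    rw [cons_append, mem_consecutivePairs_cons, ih, mem_consecutivePairs_cons, head?_append]
    cases t <;> cases ys <;> simp <;> tauto

theorem fst_mem_of_mem_consecutivePairs {p : α × α} {l : List α}
    (h : p ∈ l.consecutivePairs) : p.1 ∈ l :=
  (of_mem_zip h).1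

theorem snd_mem_of_mem_consecutivePairs {p : α × α} {l : List α}
    (h : p ∈ l.consecutivePairs) : p.2 ∈ l :=
  mem_of_mem_tail (of_mem_zip h).2

theorem mem_consecutivePairs_reverse {u v : α} {l : List α} :
    (u, v) ∈ l.reverse.consecutivePairs ↔ (v, u) ∈ l.consecutivePairs := by
  induction l with
  | nil => simp
  | cons a t ih =>
    rw [reverse_cons, mem_consecutivePairs_append, ih]
    simp [mem_consecutivePairs_cons, and_comm, or_comm, eq_comm]

theorem isChain_iff_forall_mem_consecutivePairs {R : α → α → Prop} {l : List α} :
    l.IsChain R ↔ ∀ p ∈ l.consecutivePairs, R p.1 p.2 := by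
  induction l with
  | nil => simp
  | cons a t ih =>
    rcases t with _ | ⟨b, t⟩
    · simp
    · simp only [isChain_cons_cons, ih, mem_consecutivePairs_cons, head?_cons]
      aesop

end List

section Cycles

variable {α β : Type*}

theorem mem_cycleArcs_iff {u v : α} {l : List α} :
    (u, v) ∈ cycleArcs l ↔
      (u, v) ∈ l.consecutivePairs ∨ (l.getLast? = some u ∧ l.head? = some v) := by
  rcases l with _ | ⟨a, t⟩
  · simp [cycleArcs]
  · have : cycleArcs (a :: t) = (a :: t ++ [a]).consecutivePairs := by
      have := List.zip_append (l₁ := a :: t) (l₂ := t ++ [a]) (r₁ := [a]) (r₂ := [])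
        (by simp)
      simp_all [cycleArcs, List.consecutivePairs, List.rotate_cons_succ]
    rw [this, List.mem_consecutivePairs_append]
    simp [eq_comm]

theorem fst_mem_of_mem_cycleArcs {p : α × α} {l : List α} (h : p ∈ cycleArcs l) : p.1 ∈ l :=
  (List.of_mem_zip h).1

theorem snd_mem_of_mem_cycleArcs {p : α × α} {l : List α} (h : p ∈ cycleArcs l) : p.2 ∈ l :=
  List.mem_rotate.1 (List.of_mem_zip h).2

theorem mem_cycleArcs_append_comm {u v : α} {xs ys : List α} :
    (u, v) ∈ cycleArcs (xs ++ ys) ↔ (u, v) ∈ cycleArcs (ys ++ xs) := by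
  rcases eq_or_ne xs [] with rfl | hx
  · simp
  rcases eq_or_ne ys [] with rfl | hy
  · simp
  simp only [mem_cycleArcs_iff, List.mem_consecutivePairs_append,
    List.getLast?_append_of_ne_nil _ hx, List.getLast?_append_of_ne_nil _ hy,
    List.head?_append_of_ne_nil _ hx, List.head?_append_of_ne_nil _ hy]
  tauto

theorem mem_cycleArcs_cons {y u v : α} {q : List α} (hq : q ≠ []) :
    (u, v) ∈ cycleArcs (y :: q) ↔
      (u = y ∧ q.head? = some v) ∨ (u, v) ∈ q.consecutivePairs ∨
        (q.getLast? = some u ∧ v = y) := by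
  rw [mem_cycleArcs_iff, ← List.singleton_append, List.mem_consecutivePairs_append]
  obtain ⟨b, q, rfl⟩ := List.exists_cons_of_ne_nil hq
  simp [List.getLast?_cons, eq_comm, or_assoc]

theorem mem_cycleArcs_reverse {u v : α} {l : List α} :
    (u, v) ∈ cycleArcs l.reverse ↔ (v, u) ∈ cycleArcs l := by
  simp only [mem_cycleArcs_iff, List.mem_consecutivePairs_reverse, List.getLast?_reverse,
    List.head?_reverse]
  tauto

theorem cycleArcs_map (f : α → β) (l : List α) :
    cycleArcs (l.map f) = (cycleArcs l).map (Prod.map f f) := by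
  rw [cycleArcs, cycleArcs, ← List.map_rotate, List.zip_map]

theorem mem_cycleArcs_map_iff {f : α → β} (hf : Function.Injective f) {x z : α} {l : List α} :
    (f x, f z) ∈ cycleArcs (l.map f) ↔ (x, z) ∈ cycleArcs l := by
  rw [cycleArcs_map, ← Prod.map_apply, List.mem_map_of_injective (hf.prodMap hf)]

theorem mem_cycleArcs_cons_iff_of_ne {y u v : α} {q : List α} (hu : u ≠ y) (hv : v ≠ y) :
    (u, v) ∈ cycleArcs (y :: q) ↔ (u, v) ∈ q.consecutivePairs := by
  rcases eq_or_ne q [] with rfl | hq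
  · simp [cycleArcs, hu]
  rw [mem_cycleArcs_cons hq]
  simp [hu, hv]

theorem mem_cycleArcs_cons_of_mem_consecutivePairs {y u v : α} {q : List α}
    (h : (u, v) ∈ q.consecutivePairs) : (u, v) ∈ cycleArcs (y :: q) :=
  mem_cycleArcs_iff.2 (Or.inl (List.mem_consecutivePairs_cons.2 (Or.inr h)))

theorem head?_eq_of_mem_cycleArcs_cons {y a : α} {q : List α} (hq : q ≠ []) (hyq : y ∉ q)
    (h : (y, a) ∈ cycleArcs (y :: q)) : q.head? = some a := by
  rcases (mem_cycleArcs_cons hq).1 h with ⟨-, h⟩ | h | ⟨h, -⟩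
  · exact h
  · exact absurd (List.fst_mem_of_mem_consecutivePairs h) hyq
  · exact absurd (List.mem_of_getLast? h) hyq

theorem mem_cycleArcs_cons_of_head? {y a : α} {q : List α} (h : q.head? = some a) :
    (y, a) ∈ cycleArcs (y :: q) := by
  have hq : q ≠ [] := by rintro rfl; simp at h
  rw [mem_cycleArcs_cons hq]
  exact Or.inl ⟨rfl, h⟩

theorem mem_cycleArcs_cons_of_getLast? {y u : α} {q : List α} (h : q.getLast? = some u) :
    (u, y) ∈ cycleArcs (y :: q) := by
  have hq : q ≠ [] := by rintro rfl; simp at h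
  rw [mem_cycleArcs_cons hq]
  exact Or.inr (Or.inr ⟨h, rfl⟩)

theorem exists_mem_cycleArcs_of_mem {x : α} {l : List α} (h : x ∈ l) :
    ∃ z, (x, z) ∈ cycleArcs l := by
  rw [← List.map_fst_zip (l₁ := l) (l₂ := l.rotate 1) (by simp)] at h
  obtain ⟨⟨x, z⟩, hp, rfl⟩ := List.mem_map.1 h
  exact ⟨z, hp⟩

theorem mem_cycleArcs_iff_of_isRotated {l l' : List α} (h : l ~r l') {u v : α} :
    (u, v) ∈ cycleArcs l ↔ (u, v) ∈ cycleArcs l' := by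
  obtain ⟨n, rfl⟩ := h
  rw [List.rotate_eq_drop_append_take_mod, mem_cycleArcs_append_comm, List.take_append_drop]

theorem IsDirCycle.of_isRotated {G : SimpleGraph α} {l l' : List α} (hl : IsDirCycle G l)
    (h : l ~r l') : IsDirCycle G l' :=
  ⟨h.perm.length_eq ▸ hl.1, h.nodup_iff.1 hl.2.1,
    fun p hp => hl.2.2 p ((mem_cycleArcs_iff_of_isRotated h).2 hp)⟩

end Cycles

section OCDC

variable {V W : Type*} {G : SimpleGraph V} {C : Finset (List V)}

theorem IsOCDC.eq_of_mem_cycleArcs (hC : IsOCDC G C) {L₁ L₂ : List V} (h₁ : L₁ ∈ C)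
    (h₂ : L₂ ∈ C) {p : V × V} (hp₁ : p ∈ cycleArcs L₁) (hp₂ : p ∈ cycleArcs L₂) :
    L₁ = L₂ :=
  (hC.2 p.1 p.2 ((hC.1 L₁ h₁).2.2 p hp₁)).unique ⟨h₁, hp₁⟩ ⟨h₂, hp₂⟩

theorem IsOCDC.map [DecidableEq W] {H : SimpleGraph W} (hC : IsOCDC G C) (f : G ↪g H)
    (hf : ∀ u v, H.Adj u v → ∃ x z, f x = u ∧ f z = v) :
    IsOCDC H (C.image (List.map f)) := by
  refine ⟨?_, fun u v huv => ?_⟩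
  · simp only [Finset.mem_image]
    rintro _ ⟨l, hl, rfl⟩
    obtain ⟨hlen, hnd, hadj⟩ := hC.1 l hl
    refine ⟨by simpa using hlen, hnd.map f.injective, ?_⟩
    simp only [cycleArcs_map, List.mem_map]
    rintro _ ⟨p, hp, rfl⟩
    exact f.map_adj_iff.2 (hadj p hp)
  · obtain ⟨x, z, rfl, rfl⟩ := hf u v huv
    obtain ⟨L, ⟨hL, hxz⟩, huniq⟩ := hC.2 x z (f.map_adj_iff.1 huv)
    refine ⟨L.map f,
      ⟨Finset.mem_image_of_mem _ hL, (mem_cycleArcs_map_iff f.injective).2 hxz⟩, ?_⟩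
    rintro _ ⟨hl, hxz'⟩
    obtain ⟨l, hlC, rfl⟩ := Finset.mem_image.1 hl
    rw [huniq l ⟨hlC, (mem_cycleArcs_map_iff f.injective).1 hxz'⟩]

theorem IsOCDC.image_of_isRotated [DecidableEq V] (hC : IsOCDC G C) (f : List V → List V)
    (hf : ∀ l ∈ C, l ~r f l) : IsOCDC G (C.image f) := by
  simp only [IsOCDC, Finset.mem_image, forall_exists_index, and_imp]
  refine ⟨fun _ l hl hfl => hfl ▸ (hC.1 l hl).of_isRotated (hf l hl), fun u v huv => ?_⟩
  obtain ⟨L, ⟨hL, huvL⟩, huniq⟩ := hC.2 u v huv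
  refine ⟨f L, ⟨⟨L, hL, rfl⟩, (mem_cycleArcs_iff_of_isRotated (hf L hL)).1 huvL⟩, ?_⟩
  rintro _ ⟨⟨l, hl, rfl⟩, huvl⟩
  rw [huniq l ⟨hl, (mem_cycleArcs_iff_of_isRotated (hf l hl)).2 huvl⟩]

theorem IsOCDC.exists_cons_of_mem [DecidableEq V] (hC : IsOCDC G C) (y : V) :
    ∃ C', IsOCDC G C' ∧ C'.card ≤ C.card ∧ ∀ l ∈ C', y ∈ l → ∃ q, l = y :: q := by
  have (l : List V) : ∃ l', l ~r l' ∧ (y ∈ l → ∃ q, l' = y :: q) := by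
    by_cases hy : y ∈ l
    · obtain ⟨s, t, rfl⟩ := List.append_of_mem hy
      exact ⟨y :: (t ++ s), by simpa using List.isRotated_append (l := s) (l' := y :: t),
        fun _ => ⟨_, rfl⟩⟩
    · exact ⟨l, List.IsRotated.refl l, fun h => absurd h hy⟩
  choose f hf hfy using this
  refine ⟨C.image f, hC.image_of_isRotated f fun l _ => hf l, Finset.card_image_le, ?_⟩
  simp only [Finset.mem_image, forall_exists_index, and_imp]
  rintro _ l hl rfl hy
  exact hfy l ((hf l).mem_iff.2 hy)

end OCDC

theorem exists_isOCDC_of_iso_top_fin_four {W : Type*} [DecidableEq W] {H : SimpleGraph W}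
    (φ : H ≃g (⊤ : SimpleGraph (Fin 4))) : ∃ C, IsOCDC H C ∧ C.card ≤ 4 := by
  let C : Finset (List (Fin 4)) := {[0, 1, 2], [0, 2, 3], [0, 3, 1], [1, 3, 2]}
  have hcycles : ∀ l ∈ C, IsDirCycle ⊤ l := by unfold IsDirCycle cycleArcs; decide
  have hcover :
      ∀ u v : Fin 4, u ≠ v → (C.filter fun l => (u, v) ∈ cycleArcs l).card = 1 := by
    unfold cycleArcs; decide
  have hC : IsOCDC ⊤ C := ⟨hcycles, fun u v huv => by
    simpa only [Finset.mem_filter] using Finset.card_eq_one_iff_existsUnique.1 (hcover u v huv)⟩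
  exact ⟨_, hC.map φ.symm.toEmbedding fun u v _ => ⟨φ u, φ v, by simp, by simp⟩,
    Finset.card_image_le.trans (by decide)⟩

section FinThree

theorem ncard_range_le_three {V : Type*} (c : Fin 3 → V) : (Set.range c).ncard ≤ 3 := by
  rw [← Set.image_univ]
  exact (Set.ncard_image_le (Set.toFinite _)).trans (by simp)

variable {V : Type*} {c : Fin 3 → V} {σ : Equiv.Perm (Fin 3)}

theorem perm_fin_three_eq_inv_or_eq :
    ∀ σ τ : Equiv.Perm (Fin 3), (∀ i, σ i ≠ i) → (∀ i, τ i ≠ i) →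
      τ = σ⁻¹ ∨ τ = σ := by
  decide

theorem fin_three_eq_of_ne :
    ∀ a b x y : Fin 3, a ≠ b → x ≠ a → x ≠ b → y ≠ a → y ≠ b → x = y := by
  decide

theorem perm_fin_three_mem_orbit :
    ∀ σ : Equiv.Perm (Fin 3), (∀ i, σ i ≠ i) →
      ∀ i j, j = i ∨ j = σ i ∨ j = σ (σ i) := by
  decide

theorem eq_of_apply_eq_of_apply_perm_ne (hσ : ∀ i, σ i ≠ i) {i j : Fin 3} (hij : c i = c j)
    (hi : c i ≠ c (σ i)) (hj : c j ≠ c (σ j)) : i = j := by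
  by_contra hne
  refine hne (σ.injective (fin_three_eq_of_ne i j _ _ hne (hσ i) ?_ ?_ (hσ j)))
  · exact fun h => hi (h ▸ hij)
  · exact fun h => hj (h ▸ hij.symm)

theorem exists_apply_eq_and_apply_perm_ne (hσ : ∀ i, σ i ≠ i) (hc : (Set.range c).Nontrivial)
    (i : Fin 3) : ∃ m, c m = c i ∧ c m ≠ c (σ m) := by
  by_contra! h
  have hconst : ∀ j, c j = c i := by
    intro j
    rcases perm_fin_three_mem_orbit σ hσ i j with rfl | rfl | rfl
    · rfl
    · exact (h i rfl).symm
    · exact (h (σ i) (h i rfl).symm).symm.trans (h i rfl).symm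
  obtain ⟨_, ⟨j, rfl⟩, _, ⟨k, rfl⟩, hjk⟩ := hc
  exact hjk ((hconst j).trans (hconst k).symm)

theorem apply_eq_of_not_injective (hc : ¬ Function.Injective c) {x y z : Fin 3}
    (hy : c y ≠ c x) (hz : c z ≠ c x) : c y = c z := by
  by_contra hyz
  have h3 : ({c x, c y, c z} : Set V).ncard = 3 :=
    Set.ncard_eq_three.2 ⟨_, _, _, hy.symm, hz.symm, hyz, rfl⟩
  have hsub : ({c x, c y, c z} : Set V) ⊆ Set.range c := by
    rintro _ (rfl | rfl | rfl) <;> exact Set.mem_range_self _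
  have hlt : (Set.range c).ncard < 3 := by
    refine lt_of_le_of_ne (ncard_range_le_three c) fun h => hc ?_
    rw [← Set.injOn_univ, ← Set.ncard_image_iff, Set.image_univ, h]
    simp
  have := Set.ncard_le_ncard hsub
  omega

end FinThree

section Cut

variable {V : Type*} {G : SimpleGraph V}

theorem TwoConnected.mem_of_closed (hG : TwoConnected G) {v p q : V} (hp : p ≠ v) (hq : q ≠ v)
    {P : Set V} (hP : ∀ x z, x ∈ P → G.Adj x z → z ≠ v → z ∈ P) (hpP : p ∈ P) :
    q ∈ P := by
  obtain ⟨w⟩ := (hG.2 v).preconnected ⟨p, hp⟩ ⟨q, hq⟩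
  suffices ∀ x z (w : (G.induce {u | u ≠ v}).Walk x z), (x : V) ∈ P → (z : V) ∈ P from
    this _ _ w hpP
  intro x z w
  induction w with
  | nil => exact id
  | @cons _ z _ h _ ih => exact fun hx => ih (hP _ _ hx h z.2)

theorem SimpleGraph.Reachable.induce_of_adj {s : Set V} {u x z : V} {hu : u ∈ s} {hx : x ∈ s}
    (hz : z ∈ s) (h : (G.induce s).Reachable ⟨u, hu⟩ ⟨x, hx⟩) (hxz : G.Adj x z) :
    (G.induce s).Reachable ⟨u, hu⟩ ⟨z, hz⟩ :=
  h.trans (SimpleGraph.Adj.reachable (G := G.induce s) hxz)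

theorem twoConnected_induce_of {K : SimpleGraph V} {s : Set V} (hs : 3 ≤ s.ncard)
    (h : ∀ v ∈ s, (K.induce (s \ {v})).Connected) : TwoConnected (K.induce s) := by
  refine ⟨by rwa [Nat.card_coe_set_eq], fun v => ?_⟩
  let e : (K.induce s).induce {u | u ≠ v} ≃g K.induce (s \ {(v : V)}) :=
    { toFun u := ⟨u.1.1, u.1.2, fun h => u.2 (Subtype.ext h)⟩
      invFun w := ⟨⟨w.1, w.2.1⟩, fun h => w.2.2 (congrArg Subtype.val h)⟩
      left_inv _ := rfl
      right_inv _ := rfl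
      map_rel_iff' := Iff.rfl }
  exact e.connected_iff.2 (h v v.2)

structure IsThreeEdgeCut (G : SimpleGraph V) (X : Set V) (c o : Fin 3 → V) : Prop where
  left_mem : ∀ i, c i ∈ X
  right_notMem : ∀ i, o i ∉ X
  adj : ∀ i, G.Adj (c i) (o i)
  exists_eq : ∀ u w, G.Adj u w → u ∈ X → w ∉ X → ∃ i, u = c i ∧ w = o i
  edge_injective : Function.Injective fun i => s(c i, o i)

theorem exists_isThreeEdgeCut {X : Set V} (h : (crossingEdges G X).ncard = 3) :
    ∃ c o, IsThreeEdgeCut G X c o := by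
  have : Finite (crossingEdges G X) := Set.finite_of_ncard_ne_zero (by omega)
  let e : Fin 3 ≃ crossingEdges G X :=
    (Finite.equivFinOfCardEq (by rwa [Nat.card_coe_set_eq])).symm
  choose c o hco hc ho using fun i => (e i).2.2
  refine ⟨c, o, hc, ho, fun i => ?_, fun u w huw hu hw => ?_, fun i j hij => ?_⟩
  · simpa [hco] using (e i).2.1
  · obtain ⟨i, hi⟩ := e.surjective ⟨s(u, w), huw, u, w, rfl, hu, hw⟩
    have := congrArg Subtype.val hi
    rw [hco, Sym2.eq_iff] at this
    rcases this with ⟨rfl, rfl⟩ | ⟨rfl, rfl⟩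
    · exact ⟨i, rfl, rfl⟩
    · exact absurd (hc i) hw
  · exact e.injective (Subtype.ext (by rw [hco, hco]; exact hij))

namespace IsThreeEdgeCut

variable {X : Set V} {c o : Fin 3 → V}

theorem compl (hX : IsThreeEdgeCut G X c o) : IsThreeEdgeCut G Xᶜ o c where
  left_mem := hX.right_notMem
  right_notMem i := not_not.2 (hX.left_mem i)
  adj i := (hX.adj i).symm
  exists_eq u w huw hu hw := (hX.exists_eq w u huw.symm (not_not.1 hw) hu).imp fun _ => And.symm
  edge_injective i j hij := hX.edge_injective (by simpa only [Sym2.eq_swap] using hij)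

theorem range_subset (hX : IsThreeEdgeCut G X c o) : Set.range c ⊆ X := by
  rintro _ ⟨i, rfl⟩
  exact hX.left_mem i

theorem range_nontrivial (hG : TwoConnected G) (hX : IsThreeEdgeCut G X c o)
    (hXnt : X.Nontrivial) : (Set.range c).Nontrivial := by
  by_contra hc
  obtain ⟨t, htX, htc⟩ := hXnt.exists_ne (c 0)
  have hconst : ∀ i, c i = c 0 := fun i =>
    Set.not_nontrivial_iff.1 hc (Set.mem_range_self i) (Set.mem_range_self 0)
  have hclosed : ∀ x z, x ∈ X \ {c 0} → G.Adj x z → z ≠ c 0 → z ∈ X \ {c 0} := by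
    intro x z hx hxz hz
    by_contra hzX
    obtain ⟨i, rfl, -⟩ := hX.exists_eq x z hxz hx.1 fun h => hzX ⟨h, hz⟩
    exact hx.2 (hconst i)
  have hoc : o 0 ≠ c 0 := fun h => hX.right_notMem 0 (h ▸ hX.left_mem 0)
  exact hX.right_notMem 0 (hG.mem_of_closed htc hoc hclosed ⟨htX, htc⟩).1

theorem two_le_ncard_setOf_mem (hG : TwoConnected G) (hX : IsThreeEdgeCut G X c o)
    {T : Set V} (hTX : T ⊆ X) (hT : ∀ x z, x ∈ T → z ∈ X → G.Adj x z → z ∈ T)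
    {p q : V} (hp : p ∈ T) (hq : q ∈ X \ T) : 2 ≤ {i | c i ∈ T}.ncard := by
  by_contra! hI
  obtain ⟨j, hj⟩ :=
    (Set.ncard_le_one_iff_subset_singleton (Set.toFinite _)).1 (Nat.le_of_lt_succ hI)
  -- deleting `o j` cuts `T` off from the rest of the graph
  have hclosed : ∀ x z, x ∈ T → G.Adj x z → z ≠ o j → z ∈ T := by
    intro x z hx hxz hz
    by_cases hzX : z ∈ X
    · exact hT x z hx hzX hxz
    obtain ⟨i, rfl, rfl⟩ := hX.exists_eq x z hxz (hTX hx) hzX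
    exact absurd (congrArg o (hj hx)) hz
  have hne {x : V} (hx : x ∈ X) : x ≠ o j := fun h => hX.right_notMem j (h ▸ hx)
  exact hq.2 (hG.mem_of_closed (hne (hTX hp)) (hne hq.1) hclosed hp)

theorem connected_induce (hG : TwoConnected G) (hX : IsThreeEdgeCut G X c o)
    (hXne : X.Nonempty) : (G.induce X).Connected := by
  obtain ⟨u, hu⟩ := hXne
  rw [connected_iff_exists_forall_reachable]
  refine ⟨⟨u, hu⟩, fun ⟨w, hw⟩ => ?_⟩
  by_contra huw
  let T (x : V) : Set V :=
    {z | ∃ (hx : x ∈ X) (hz : z ∈ X), (G.induce X).Reachable ⟨x, hx⟩ ⟨z, hz⟩}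
  have hTX (x : V) : T x ⊆ X := fun z hz => hz.2.1
  have hT (x : V) : ∀ z z', z ∈ T x → z' ∈ X → G.Adj z z' → z' ∈ T x :=
    fun z z' ⟨hx, hz, h⟩ hz' hzz' => ⟨hx, hz', h.induce_of_adj hz' hzz'⟩
  have hTu : w ∉ T u := fun ⟨_, _, h⟩ => huw h
  have hTw : u ∉ T w := fun ⟨_, _, h⟩ => huw h.symm
  have h₁ := two_le_ncard_setOf_mem hG hX (hTX u) (hT u) ⟨hu, hu, .rfl⟩ ⟨hw, hTu⟩
  have h₂ := two_le_ncard_setOf_mem hG hX (hTX w) (hT w) ⟨hw, hw, .rfl⟩ ⟨hu, hTw⟩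
  have hdisj : Disjoint {i | c i ∈ T u} {i | c i ∈ T w} :=
    Set.disjoint_left.2 fun i ⟨_, _, h⟩ ⟨_, _, h'⟩ => huw (h.trans h'.symm)
  have := Set.ncard_union_eq hdisj ▸ Set.ncard_le_ncard (Set.subset_univ _)
  simp only [Set.ncard_univ, Nat.card_eq_fintype_card, Fintype.card_fin] at this
  omega

theorem exists_reachable_left_mem (hG : TwoConnected G) (hX : IsThreeEdgeCut G X c o) {u v : V}
    (hu : u ∈ X) (hv : v ∈ X) (huv : u ≠ v) :
    ∃ i, ∃ hi : c i ∈ X \ {v},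
      (G.induce (X \ {v})).Reachable ⟨u, hu, huv⟩ ⟨c i, hi⟩ := by
  by_contra! h
  let T : Set V :=
    {z | ∃ hz : z ∈ X \ {v}, (G.induce (X \ {v})).Reachable ⟨u, hu, huv⟩ ⟨z, hz⟩}
  have hclosed : ∀ x z, x ∈ T → G.Adj x z → z ≠ v → z ∈ T := by
    rintro x z ⟨hx, hux⟩ hxz hz
    by_cases hzX : z ∈ X
    · exact ⟨⟨hzX, hz⟩, hux.induce_of_adj _ hxz⟩
    obtain ⟨i, rfl, -⟩ := hX.exists_eq x z hxz hx.1 hzX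
    exact absurd hux (h i hx)
  have hov : o 0 ≠ v := fun h => hX.right_notMem 0 (h ▸ hv)
  exact hX.right_notMem 0 (hG.mem_of_closed huv hov hclosed ⟨⟨hu, huv⟩, .rfl⟩).1.1

end IsThreeEdgeCut

end Cut

section SideGraph

variable {V : Type*} {G : SimpleGraph V}

/-- Restricted to `insert y X`, with `y ∉ X` and `A` the ends in `X` of the edges leaving `X`,
this is `G` with `Xᶜ` contracted to `y`. -/
def sideGraph (G : SimpleGraph V) (X : Set V) (y : V) (A : Set V) : SimpleGraph V :=
  SimpleGraph.fromRel fun u v => (u ∈ X ∧ v ∈ X ∧ G.Adj u v) ∨ (u = y ∧ v ∈ A)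

variable {X A : Set V} {y : V}

theorem sideGraph_adj_iff_of_mem (hy : y ∉ X) {x z : V} (hx : x ∈ X) (hz : z ∈ X) :
    (sideGraph G X y A).Adj x z ↔ G.Adj x z := by
  have : x ≠ y := fun h => hy (h ▸ hx)
  have : z ≠ y := fun h => hy (h ▸ hz)
  simp only [sideGraph, fromRel_adj]
  refine ⟨?_, fun h => ⟨h.ne, Or.inl (Or.inl ⟨hx, hz, h⟩)⟩⟩
  rintro ⟨-, (⟨-, -, h⟩ | ⟨h, -⟩) | (⟨-, -, h⟩ | ⟨h, -⟩)⟩ <;>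
    first | exact h | exact h.symm | exact absurd h ‹_›

theorem mem_of_sideGraph_adj_left (hy : y ∉ X) {z : V} (h : (sideGraph G X y A).Adj y z) :
    z ∈ A := by
  simp only [sideGraph, fromRel_adj] at h
  rcases h with ⟨hne, (⟨h, -⟩ | ⟨-, h⟩) | (⟨-, h, -⟩ | ⟨h, -⟩)⟩
  exacts [absurd h hy, h, absurd h hy, absurd h.symm hne]

theorem sideGraph_adj_of_mem {a : V} (ha : a ∈ A) (hya : y ≠ a) :
    (sideGraph G X y A).Adj y a :=
  (fromRel_adj _ _ _).2 ⟨hya, Or.inl (Or.inr ⟨rfl, ha⟩)⟩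

theorem sideGraph_adj_of_ne {u v : V} (h : (sideGraph G X y A).Adj u v)
    (hu : u ≠ y) (hv : v ≠ y) : u ∈ X ∧ v ∈ X ∧ G.Adj u v := by
  simp only [sideGraph, fromRel_adj] at h
  rcases h with ⟨-, (h | ⟨h, -⟩) | (⟨h₁, h₂, h₃⟩ | ⟨h, -⟩)⟩
  exacts [h, absurd h hu, ⟨h₂, h₁, h₃.symm⟩, absurd h hv]

theorem mem_insert_of_sideGraph_adj (hA : A ⊆ X) {u v : V} (h : (sideGraph G X y A).Adj u v) :
    u ∈ insert y X := by
  by_cases hu : u = y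
  · exact hu ▸ Set.mem_insert _ _
  by_cases hv : v = y
  · subst hv
    simp only [sideGraph, fromRel_adj] at h
    rcases h with ⟨-, (⟨h, -⟩ | ⟨h, -⟩) | (⟨-, h, -⟩ | ⟨-, h⟩)⟩
    exacts [Or.inr h, absurd h hu, Or.inr h, Or.inr (hA h)]
  exact Or.inr (sideGraph_adj_of_ne h hu hv).1

theorem induce_sideGraph (hy : y ∉ X) : (sideGraph G X y A).induce X = G.induce X := by
  ext x z
  exact sideGraph_adj_iff_of_mem hy x.2 z.2

theorem subset_of_iso_top (hy : y ∉ X) {n : ℕ}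
    (φ : (sideGraph G X y A).induce (insert y X) ≃g (⊤ : SimpleGraph (Fin n))) : X ⊆ A := by
  intro x hx
  have hxy :
      (⟨y, Set.mem_insert _ _⟩ : ↥(insert y X)) ≠ ⟨x, Set.mem_insert_of_mem _ hx⟩ :=
    fun h => hy (by rw [Subtype.mk.injEq] at h; rwa [h])
  exact mem_of_sideGraph_adj_left hy (φ.map_adj_iff.1 ((top_adj _ _).2 (φ.injective.ne hxy)))

end SideGraph

section SideCycle

variable {V : Type*} {G : SimpleGraph V} {X A : Set V} {y : V}

theorem IsDirCycle.mem_of_sideGraph (hA : A ⊆ X) {l : List V}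
    (hl : IsDirCycle (sideGraph G X y A) l) {x : V} (hx : x ∈ l) (hxy : x ≠ y) : x ∈ X := by
  obtain ⟨z, hz⟩ := exists_mem_cycleArcs_of_mem hx
  exact (mem_insert_of_sideGraph_adj hA (hl.2.2 _ hz)).resolve_left hxy

theorem IsDirCycle.of_sideGraph {l : List V} (hl : IsDirCycle (sideGraph G X y A) l)
    (hyl : y ∉ l) : IsDirCycle G l := by
  refine ⟨hl.1, hl.2.1, fun p hp => ?_⟩
  have h₁ : p.1 ≠ y := fun h => hyl (h ▸ fst_mem_of_mem_cycleArcs hp)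
  have h₂ : p.2 ≠ y := fun h => hyl (h ▸ snd_mem_of_mem_cycleArcs hp)
  exact (sideGraph_adj_of_ne (hl.2.2 p hp) h₁ h₂).2.2

theorem IsDirCycle.isDirPath_of_cons_sideGraph {q : List V}
    (hq : IsDirCycle (sideGraph G X y A) (y :: q)) : IsDirPath G q := by
  obtain ⟨hyq, hnd⟩ := List.nodup_cons.1 hq.2.1
  refine ⟨fun h => by simpa [h] using hq.1, hnd,
    List.isChain_iff_forall_mem_consecutivePairs.2 ?_⟩
  rintro ⟨u, v⟩ huv
  have hu : u ≠ y := fun h => hyq (h ▸ List.fst_mem_of_mem_consecutivePairs huv)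
  have hv : v ≠ y := fun h => hyq (h ▸ List.snd_mem_of_mem_consecutivePairs huv)
  exact (sideGraph_adj_of_ne (hq.2.2 _ ((mem_cycleArcs_cons_iff_of_ne hu hv).2 huv)) hu hv).2.2

theorem IsDirCycle.exists_getLast?_of_cons_sideGraph (hy : y ∉ X) {q : List V}
    (hq : IsDirCycle (sideGraph G X y A) (y :: q)) :
    ∃ a ∈ A, q.getLast? = some a ∧ q.head? ≠ some a := by
  obtain ⟨hyq, hnd⟩ := List.nodup_cons.1 hq.2.1
  obtain ⟨b, r, rfl⟩ := List.exists_cons_of_ne_nil (hq.isDirPath_of_cons_sideGraph).1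
  have hr : r ≠ [] := by rintro rfl; simpa using hq.1
  obtain ⟨a, ha⟩ := Option.ne_none_iff_exists'.1 (List.getLast?_eq_none_iff.not.2 hr)
  have hlast : (b :: r).getLast? = some a := by rw [List.getLast?_cons, ha]; rfl
  refine ⟨a, mem_of_sideGraph_adj_left hy (hq.2.2 _ (mem_cycleArcs_cons_of_getLast? hlast)).symm,
    hlast, fun h => (List.nodup_cons.1 hnd).1 ?_⟩
  rw [List.head?_cons, Option.some.injEq] at h
  exact h ▸ List.mem_of_getLast? ha

end SideCycle

namespace IsThreeEdgeCut

variable {V : Type} [Finite V] {G : SimpleGraph V} {X : Set V} {c o : Fin 3 → V}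

theorem twoConnected_sideGraph (hG : TwoConnected G) (hX : IsThreeEdgeCut G X c o)
    (hXnt : X.Nontrivial) :
    TwoConnected ((sideGraph G X (o 0) (Set.range c)).induce (insert (o 0) X)) := by
  have hy := hX.right_notMem 0
  refine twoConnected_induce_of ?_ fun v hv => ?_
  · rw [Set.ncard_insert_of_notMem hy]
    have := (Set.one_lt_ncard_iff_nontrivial).2 hXnt
    omega
  rcases hv with rfl | hvX
  · rw [Set.insert_sdiff_self_of_notMem hy, induce_sideGraph hy]
    exact hX.connected_induce hG hXnt.nonempty
  have hyv : o 0 ≠ v := fun h => hy (h ▸ hvX)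
  let φ : G.induce (X \ {v}) →g
      (sideGraph G X (o 0) (Set.range c)).induce (insert (o 0) X \ {v}) :=
    ⟨fun x => ⟨x, Set.mem_insert_of_mem _ x.2.1, x.2.2⟩,
      fun {a b} h => (sideGraph_adj_iff_of_mem hy a.2.1 b.2.1).2 h⟩
  rw [connected_iff_exists_forall_reachable]
  refine ⟨⟨o 0, Set.mem_insert _ _, hyv⟩, fun ⟨u, hu, huv⟩ => ?_⟩
  rcases hu with rfl | huX
  · rfl
  obtain ⟨i, hi, hreach⟩ := hX.exists_reachable_left_mem hG huX hvX huv
  have hadj : (sideGraph G X (o 0) (Set.range c)).Adj (o 0) (c i) :=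
    sideGraph_adj_of_mem (Set.mem_range_self i) fun h => hy (by rw [h]; exact hX.left_mem i)
  exact ((hreach.map φ).trans (SimpleGraph.Adj.reachable (u := φ ⟨c i, hi⟩)
    (v := ⟨o 0, Set.mem_insert _ _, hyv⟩) hadj.symm)).symm

theorem ncard_edgeSet_sideGraph_le (hX : IsThreeEdgeCut G X c o) :
    (sideGraph G X (o 0) (Set.range c)).edgeSet.ncard ≤ G.edgeSet.ncard := by
  let inner : Set (Sym2 V) := {e | e ∈ G.edgeSet ∧ ∀ x ∈ e, x ∈ X}
  have hinner {x z : V} (hx : x ∈ X) (hz : z ∈ X) (h : G.Adj x z) : s(x, z) ∈ inner :=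
    ⟨h, fun w hw => by rcases Sym2.mem_iff.1 hw with rfl | rfl <;> assumption⟩
  have hK : (sideGraph G X (o 0) (Set.range c)).edgeSet ⊆
      inner ∪ Set.range fun i => s(o 0, c i) := by
    intro e he
    induction e using Sym2.ind with
    | _ x z =>
      simp only [mem_edgeSet, sideGraph, fromRel_adj] at he
      rcases he with
        ⟨-, (⟨hx, hz, h⟩ | ⟨rfl, i, rfl⟩) | (⟨hz, hx, h⟩ | ⟨rfl, i, rfl⟩)⟩
      exacts [Or.inl (hinner hx hz h), Or.inr ⟨i, rfl⟩, Or.inl (hinner hx hz h.symm),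
        Or.inr ⟨i, Sym2.eq_swap⟩]
  have hdisj : Disjoint inner (Set.range fun i => s(c i, o i)) := by
    refine Set.disjoint_left.2 fun e he ⟨i, hi⟩ => hX.right_notMem i (he.2 _ ?_)
    rw [← hi]
    exact Sym2.mem_mk_right _ _
  have hG : inner ∪ (Set.range fun i => s(c i, o i)) ⊆ G.edgeSet := by
    rintro _ (he | ⟨i, rfl⟩)
    exacts [he.1, hX.adj i]
  calc (sideGraph G X (o 0) (Set.range c)).edgeSet.ncard
    _ ≤ (inner ∪ Set.range fun i => s(o 0, c i)).ncard := Set.ncard_le_ncard hK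
    _ ≤ inner.ncard + 3 :=
      (Set.ncard_union_le _ _).trans (by simpa using ncard_range_le_three _)
    _ = (inner ∪ Set.range fun i => s(c i, o i)).ncard := by
      rw [Set.ncard_union_eq hdisj, Set.ncard_range_of_injective hX.edge_injective]
      simp
    _ ≤ G.edgeSet.ncard := Set.ncard_le_ncard hG

theorem card_add_card_edgeSet_sideGraph_lt (hX : IsThreeEdgeCut G X c o)
    (hXc : Xᶜ.Nontrivial) :
    Nat.card ↥(insert (o 0) X) +
        Nat.card ((sideGraph G X (o 0) (Set.range c)).induce (insert (o 0) X)).edgeSet <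
      Nat.card V + Nat.card G.edgeSet := by
  have hE := Nat.card_le_card_of_injective _ (Embedding.induce
    (G := sideGraph G X (o 0) (Set.range c)) (insert (o 0) X)).mapEdgeSet.injective
  have hV : Nat.card V = X.ncard + Xᶜ.ncard := (Set.ncard_add_ncard_compl X).symm
  have := (Set.one_lt_ncard_iff_nontrivial).2 hXc
  have := hX.ncard_edgeSet_sideGraph_le
  simp only [Nat.card_coe_set_eq] at hE ⊢
  rw [Set.ncard_insert_of_notMem (hX.right_notMem 0)]
  omega

theorem exists_isOCDC_sideGraph (hmin : MinimalCounterexample G) (hX : IsThreeEdgeCut G X c o)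
    (hXnt : X.Nontrivial) (hXc : Xᶜ.Nontrivial) :
    ∃ D, IsOCDC (sideGraph G X (o 0) (Set.range c)) D ∧
      D.card + 2 ≤ X.ncard + (Set.range c).ncard := by
  classical
  set K := sideGraph G X (o 0) (Set.range c)
  set s := insert (o 0) X
  have hy := hX.right_notMem 0
  have hs : Nat.card s = X.ncard + 1 := by
    rw [Nat.card_coe_set_eq, Set.ncard_insert_of_notMem hy]
  have hcomplete {n : ℕ} (φ : K.induce s ≃g (⊤ : SimpleGraph (Fin n))) :
      X.ncard + 1 = n ∧ X.ncard ≤ (Set.range c).ncard :=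
    ⟨by rw [← hs, Nat.card_congr φ.toEquiv, Nat.card_eq_fintype_card, Fintype.card_fin],
      Set.ncard_le_ncard (subset_of_iso_top hy φ)⟩
  have hK6 : ¬ Nonempty (K.induce s ≃g (⊤ : SimpleGraph (Fin 6))) := fun ⟨φ⟩ => by
    have := hcomplete φ
    have := ncard_range_le_three c
    omega
  obtain ⟨C, hC, hCcard⟩ : ∃ C, IsOCDC (K.induce s) C ∧
      C.card + 2 ≤ X.ncard + (Set.range c).ncard := by
    by_cases hK4 : Nonempty (K.induce s ≃g (⊤ : SimpleGraph (Fin 4)))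
    · obtain ⟨φ⟩ := hK4
      obtain ⟨C, hC, hC4⟩ := exists_isOCDC_of_iso_top_fin_four φ
      have := hcomplete φ
      exact ⟨C, hC, by omega⟩
    · obtain ⟨C, hC, hCcard⟩ := hmin.2.2.2.2 s (K.induce s)
        (hX.twoConnected_sideGraph hmin.1 hXnt) hK4 hK6 (hX.card_add_card_edgeSet_sideGraph_lt hXc)
      have := (Set.one_lt_ncard_iff_nontrivial).2 (hX.range_nontrivial hmin.1 hXnt)
      exact ⟨C, hC, by omega⟩
  have hKs {u v : V} (h : K.Adj u v) : u ∈ s := mem_insert_of_sideGraph_adj hX.range_subset h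
  exact ⟨_, hC.map (Embedding.induce s) fun u v h =>
      ⟨⟨u, hKs h⟩, ⟨v, hKs h.symm⟩, rfl, rfl⟩,
    (Nat.add_le_add_right Finset.card_image_le 2).trans hCcard⟩

end IsThreeEdgeCut

/-- What an OCDC of the side graph leaves inside `X` once the contracted vertex is deleted. -/
structure CutSideDecomposition {V : Type*} (G : SimpleGraph V) (X : Set V) (c : Fin 3 → V)
    (σ : Equiv.Perm (Fin 3)) where
  path : Fin 3 → List V
  cycles : Finset (List V)
  isDirPath_path : ∀ i, IsDirPath G (path i)
  head?_path : ∀ i, (path i).head? = some (c i)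
  getLast?_path : ∀ i, (path i).getLast? = some (c (σ i))
  path_subset : ∀ i, ∀ x ∈ path i, x ∈ X
  isDirCycle_of_mem : ∀ l ∈ cycles, IsDirCycle G l
  cycle_subset : ∀ l ∈ cycles, ∀ x ∈ l, x ∈ X
  exists_mem_of_adj : ∀ u v, G.Adj u v → u ∈ X → v ∈ X →
    (∃ i, (u, v) ∈ (path i).consecutivePairs) ∨ ∃ l ∈ cycles, (u, v) ∈ cycleArcs l
  path_unique : ∀ {u v i j}, (u, v) ∈ (path i).consecutivePairs →
    (u, v) ∈ (path j).consecutivePairs → i = j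
  notMem_cycleArcs : ∀ {u v i l}, l ∈ cycles → (u, v) ∈ (path i).consecutivePairs →
    (u, v) ∉ cycleArcs l
  cycle_unique : ∀ {u v l l'}, l ∈ cycles → l' ∈ cycles → (u, v) ∈ cycleArcs l →
    (u, v) ∈ cycleArcs l' → l = l'
  card_cycles_add_two_le : cycles.card + 2 ≤ X.ncard

namespace CutSideDecomposition

variable {V : Type*} {G : SimpleGraph V} {X : Set V} {c : Fin 3 → V} {σ : Equiv.Perm (Fin 3)}

def reverse [DecidableEq V] (M : CutSideDecomposition G X c σ) :
    CutSideDecomposition G X c σ⁻¹ where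
  path i := (M.path (σ⁻¹ i)).reverse
  cycles := M.cycles.image List.reverse
  isDirPath_path i := by
    obtain ⟨hne, hnd, hch⟩ := M.isDirPath_path (σ⁻¹ i)
    exact ⟨by simpa using hne, List.nodup_reverse.2 hnd,
      List.isChain_reverse.2 (hch.imp fun _ _ h => h.symm)⟩
  head?_path i := by
    rw [List.head?_reverse, M.getLast?_path, Equiv.Perm.coe_inv, Equiv.apply_symm_apply]
  getLast?_path i := by rw [List.getLast?_reverse, M.head?_path]
  path_subset i x hx := M.path_subset _ x (List.mem_reverse.1 hx)
  isDirCycle_of_mem := by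
    simp only [Finset.mem_image, forall_exists_index, and_imp]
    rintro _ l hl rfl
    obtain ⟨hlen, hnd, hadj⟩ := M.isDirCycle_of_mem l hl
    exact ⟨by simpa using hlen, List.nodup_reverse.2 hnd,
      fun p hp => (hadj (p.2, p.1) (mem_cycleArcs_reverse.1 hp)).symm⟩
  cycle_subset := by
    simp only [Finset.mem_image, forall_exists_index, and_imp]
    rintro _ l hl rfl x hx
    exact M.cycle_subset l hl x (List.mem_reverse.1 hx)
  exists_mem_of_adj u v huv hu hv := by
    rcases M.exists_mem_of_adj v u huv.symm hv hu with ⟨i, hi⟩ | ⟨l, hl, hvu⟩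
    · exact Or.inl ⟨σ i, by simpa [List.mem_consecutivePairs_reverse] using hi⟩
    · exact Or.inr ⟨l.reverse, Finset.mem_image_of_mem _ hl, mem_cycleArcs_reverse.2 hvu⟩
  path_unique hi hj := σ⁻¹.injective <|
    M.path_unique (List.mem_consecutivePairs_reverse.1 hi) (List.mem_consecutivePairs_reverse.1 hj)
  notMem_cycleArcs hl hi hl' := by
    obtain ⟨l, hlM, rfl⟩ := Finset.mem_image.1 hl
    exact M.notMem_cycleArcs hlM (List.mem_consecutivePairs_reverse.1 hi)
      (mem_cycleArcs_reverse.1 hl')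
  cycle_unique hl hl' h h' := by
    obtain ⟨l, hlM, rfl⟩ := Finset.mem_image.1 hl
    obtain ⟨l', hlM', rfl⟩ := Finset.mem_image.1 hl'
    rw [M.cycle_unique hlM hlM' (mem_cycleArcs_reverse.1 h) (mem_cycleArcs_reverse.1 h')]
  card_cycles_add_two_le :=
    (Nat.add_le_add_right Finset.card_image_le 2).trans M.card_cycles_add_two_le

theorem existsUnique_mem_cycleArcs (M : CutSideDecomposition G X c σ) {F : Finset (List V)}
    (g : Fin 3 → List V) (hMF : M.cycles ⊆ F) (hgF : ∀ m, g m ∈ F) {u v : V}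
    (huv : G.Adj u v) (hu : u ∈ X) (hv : v ∈ X)
    (hg : ∀ m, (u, v) ∈ (M.path m).consecutivePairs → (u, v) ∈ cycleArcs (g m))
    (hF : ∀ l ∈ F, (u, v) ∈ cycleArcs l →
      l ∈ M.cycles ∨ ∃ m, l = g m ∧ (u, v) ∈ (M.path m).consecutivePairs) :
    ∃! l, l ∈ F ∧ (u, v) ∈ cycleArcs l := by
  obtain ⟨l₀, hl₀, huv₀⟩ : ∃ l ∈ F, (u, v) ∈ cycleArcs l := by
    rcases M.exists_mem_of_adj u v huv hu hv with ⟨m, hm⟩ | ⟨l, hl, h⟩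
    exacts [⟨g m, hgF m, hg m hm⟩, ⟨l, hMF hl, h⟩]
  refine ⟨l₀, ⟨hl₀, huv₀⟩, fun l ⟨hl, hl_uv⟩ => ?_⟩
  rcases hF l hl hl_uv with hlM | ⟨m, rfl, hm⟩ <;>
    rcases hF l₀ hl₀ huv₀ with h₀M | ⟨m₀, rfl, hm₀⟩
  · exact M.cycle_unique hlM h₀M hl_uv huv₀
  · exact absurd hl_uv (M.notMem_cycleArcs hlM hm₀)
  · exact absurd huv₀ (M.notMem_cycleArcs h₀M hm)
  · rw [M.path_unique hm hm₀]

variable {S : Set V} {a b : Fin 3 → V} (M : CutSideDecomposition G S a σ)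
  (N : CutSideDecomposition G Sᶜ b σ⁻¹)

/-- The directed cycle `a m ⤳ a (σ m) → b (σ m) ⤳ b m → a m`. -/
def glue (m : Fin 3) : List V := M.path m ++ N.path (σ m)

theorem mem_cycleArcs_glue {m : Fin 3} {u v : V} :
    (u, v) ∈ cycleArcs (M.glue N m) ↔ (u, v) ∈ (M.path m).consecutivePairs ∨
      (u = a (σ m) ∧ v = b (σ m)) ∨ (u, v) ∈ (N.path (σ m)).consecutivePairs ∨
      (u = b m ∧ v = a m) := by
  rw [glue, mem_cycleArcs_iff, List.mem_consecutivePairs_append, List.getLast?_append,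
    List.head?_append, M.getLast?_path, N.head?_path, N.getLast?_path, M.head?_path]
  simp [eq_comm, or_assoc]

theorem isDirCycle_glue (hS : IsThreeEdgeCut G S a b) (hσ : ∀ i, σ i ≠ i) (m : Fin 3) :
    IsDirCycle G (M.glue N m) := by
  obtain ⟨hMne, hMnd, hMch⟩ := M.isDirPath_path m
  obtain ⟨hNne, hNnd, hNch⟩ := N.isDirPath_path (σ m)
  refine ⟨?_, hMnd.append hNnd fun x hxM hxN => N.path_subset _ x hxN (M.path_subset m x hxM),
    fun ⟨u, v⟩ huv => ?_⟩
  · by_contra! hlen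
    rw [glue, List.length_append] at hlen
    have := List.length_pos_of_ne_nil hMne
    have := List.length_pos_of_ne_nil hNne
    obtain ⟨x, hx⟩ := List.length_eq_one_iff.1 (by omega : (M.path m).length = 1)
    obtain ⟨z, hz⟩ := List.length_eq_one_iff.1 (by omega : (N.path (σ m)).length = 1)
    have ha := M.head?_path m
    have ha' := M.getLast?_path m
    have hb := N.head?_path (σ m)
    have hb' := N.getLast?_path (σ m)
    simp only [hx, hz, List.head?_singleton, List.getLast?_singleton, Option.some.injEq,
      Equiv.Perm.coe_inv, Equiv.symm_apply_apply] at ha ha' hb hb'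
    refine hσ m (hS.edge_injective ?_).symm
    simp only [← ha, ← ha', ← hb, ← hb']
  rcases (M.mem_cycleArcs_glue N).1 huv with h | ⟨rfl, rfl⟩ | h | ⟨rfl, rfl⟩
  · exact List.isChain_iff_forall_mem_consecutivePairs.1 hMch _ h
  · exact hS.adj _
  · exact List.isChain_iff_forall_mem_consecutivePairs.1 hNch _ h
  · exact (hS.adj m).symm

variable [DecidableEq V]

def glueCycles : Finset (List V) := M.cycles ∪ N.cycles ∪ Finset.univ.image (M.glue N)

theorem mem_glueCycles {l : List V} :
    l ∈ M.glueCycles N ↔ l ∈ M.cycles ∨ l ∈ N.cycles ∨ ∃ m, M.glue N m = l := by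
  simp [glueCycles]

theorem glue_mem_glueCycles (m : Fin 3) : M.glue N m ∈ M.glueCycles N :=
  (M.mem_glueCycles N).2 (Or.inr (Or.inr ⟨m, rfl⟩))

theorem mem_cycles_or_eq_glue_of_mem (hS : IsThreeEdgeCut G S a b) {l : List V}
    (hl : l ∈ M.glueCycles N) {u v : V} (huv : (u, v) ∈ cycleArcs l) (hu : u ∈ S)
    (hv : v ∈ S) :
    l ∈ M.cycles ∨ ∃ m, l = M.glue N m ∧ (u, v) ∈ (M.path m).consecutivePairs := by
  rcases (M.mem_glueCycles N).1 hl with hl | hl | ⟨m, rfl⟩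
  · exact Or.inl hl
  · exact absurd hu (N.cycle_subset l hl u (fst_mem_of_mem_cycleArcs huv))
  rcases (M.mem_cycleArcs_glue N).1 huv with h | ⟨-, rfl⟩ | h | ⟨rfl, -⟩
  · exact Or.inr ⟨m, rfl, h⟩
  · exact absurd hv (hS.right_notMem _)
  · exact absurd hu (N.path_subset _ u (List.fst_mem_of_mem_consecutivePairs h))
  · exact absurd hu (hS.right_notMem m)

theorem mem_cycles_or_eq_glue_of_notMem (hS : IsThreeEdgeCut G S a b) {l : List V}
    (hl : l ∈ M.glueCycles N) {u v : V} (huv : (u, v) ∈ cycleArcs l) (hu : u ∉ S)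
    (hv : v ∉ S) :
    l ∈ N.cycles ∨ ∃ m, l = M.glue N (σ⁻¹ m) ∧ (u, v) ∈ (N.path m).consecutivePairs := by
  rcases (M.mem_glueCycles N).1 hl with hl | hl | ⟨m, rfl⟩
  · exact absurd (M.cycle_subset l hl u (fst_mem_of_mem_cycleArcs huv)) hu
  · exact Or.inl hl
  rcases (M.mem_cycleArcs_glue N).1 huv with h | ⟨rfl, -⟩ | h | ⟨-, rfl⟩
  · exact absurd (M.path_subset m _ (List.fst_mem_of_mem_consecutivePairs h)) hu
  · exact absurd (hS.left_mem _) hu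
  · exact Or.inr ⟨σ m, by simp, h⟩
  · exact absurd (hS.left_mem m) hv

theorem eq_glue_of_mem_cycleArcs_out (hS : IsThreeEdgeCut G S a b) {l : List V}
    (hl : l ∈ M.glueCycles N) {j : Fin 3} (h : (a j, b j) ∈ cycleArcs l) :
    l = M.glue N (σ⁻¹ j) := by
  have hu := hS.left_mem j
  have hv := hS.right_notMem j
  rcases (M.mem_glueCycles N).1 hl with hl | hl | ⟨m, rfl⟩
  · exact absurd (M.cycle_subset l hl _ (snd_mem_of_mem_cycleArcs h)) hv
  · exact absurd hu (N.cycle_subset l hl _ (fst_mem_of_mem_cycleArcs h))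
  rcases (M.mem_cycleArcs_glue N).1 h with h | ⟨h₁, h₂⟩ | h | ⟨h₁, -⟩
  · exact absurd (M.path_subset m _ (List.snd_mem_of_mem_consecutivePairs h)) hv
  · rw [hS.edge_injective (show s(a j, b j) = s(a (σ m), b (σ m)) by rw [← h₁, ← h₂])]
    simp
  · exact absurd hu (N.path_subset _ _ (List.fst_mem_of_mem_consecutivePairs h))
  · exact absurd (h₁ ▸ hu) (hS.right_notMem m)

theorem eq_glue_of_mem_cycleArcs_in (hS : IsThreeEdgeCut G S a b) {l : List V}
    (hl : l ∈ M.glueCycles N) {j : Fin 3} (h : (b j, a j) ∈ cycleArcs l) : l = M.glue N j := by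
  have hu := hS.right_notMem j
  have hv := hS.left_mem j
  rcases (M.mem_glueCycles N).1 hl with hl | hl | ⟨m, rfl⟩
  · exact absurd (M.cycle_subset l hl _ (fst_mem_of_mem_cycleArcs h)) hu
  · exact absurd hv (N.cycle_subset l hl _ (snd_mem_of_mem_cycleArcs h))
  rcases (M.mem_cycleArcs_glue N).1 h with h | ⟨-, h₂⟩ | h | ⟨h₁, h₂⟩
  · exact absurd (M.path_subset m _ (List.fst_mem_of_mem_consecutivePairs h)) hu
  · exact absurd (h₂ ▸ hv) (hS.right_notMem _)
  · exact absurd hv (N.path_subset _ _ (List.snd_mem_of_mem_consecutivePairs h))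
  · rw [hS.edge_injective (show s(a j, b j) = s(a m, b m) by rw [← h₁, ← h₂])]

theorem isOCDC_glueCycles (hS : IsThreeEdgeCut G S a b) (hσ : ∀ i, σ i ≠ i) :
    IsOCDC G (M.glueCycles N) := by
  refine ⟨fun l hl => ?_, fun u v huv => ?_⟩
  · rcases (M.mem_glueCycles N).1 hl with hl | hl | ⟨m, rfl⟩
    exacts [M.isDirCycle_of_mem l hl, N.isDirCycle_of_mem l hl, M.isDirCycle_glue N hS hσ m]
  have hM : M.cycles ⊆ M.glueCycles N := fun l hl => (M.mem_glueCycles N).2 (Or.inl hl)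
  have hN : N.cycles ⊆ M.glueCycles N := fun l hl => (M.mem_glueCycles N).2 (Or.inr (Or.inl hl))
  by_cases hu : u ∈ S <;> by_cases hv : v ∈ S
  · exact M.existsUnique_mem_cycleArcs (M.glue N) hM (M.glue_mem_glueCycles N) huv hu hv
      (fun m h => (M.mem_cycleArcs_glue N).2 (Or.inl h))
      fun l hl hluv => M.mem_cycles_or_eq_glue_of_mem N hS hl hluv hu hv
  · obtain ⟨j, rfl, rfl⟩ := hS.exists_eq u v huv hu hv
    exact ⟨M.glue N (σ⁻¹ j), ⟨M.glue_mem_glueCycles N _,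
      (M.mem_cycleArcs_glue N).2 (Or.inr (Or.inl (by simp)))⟩,
      fun l ⟨hl, hluv⟩ => M.eq_glue_of_mem_cycleArcs_out N hS hl hluv⟩
  · obtain ⟨j, rfl, rfl⟩ := hS.compl.exists_eq u v huv hu (not_not.2 hv)
    exact ⟨M.glue N j, ⟨M.glue_mem_glueCycles N _,
      (M.mem_cycleArcs_glue N).2 (Or.inr (Or.inr (Or.inr ⟨rfl, rfl⟩)))⟩,
      fun l ⟨hl, hluv⟩ => M.eq_glue_of_mem_cycleArcs_in N hS hl hluv⟩
  · exact N.existsUnique_mem_cycleArcs (fun m => M.glue N (σ⁻¹ m)) hN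
      (fun _ => M.glue_mem_glueCycles N _) huv hu hv
      (fun m h => (M.mem_cycleArcs_glue N).2 (Or.inr (Or.inr (Or.inl (by simpa using h)))))
      fun l hl hluv => M.mem_cycles_or_eq_glue_of_notMem N hS hl hluv hu hv

theorem card_glueCycles_le [Finite V] :
    (M.glueCycles N).card + 1 ≤ Nat.card V := by
  have hcard : (M.glueCycles N).card ≤ M.cycles.card + N.cycles.card + 3 :=
    calc (M.glueCycles N).card
      _ ≤ (M.cycles ∪ N.cycles).card + (Finset.univ.image (M.glue N)).card :=
        Finset.card_union_le _ _
      _ ≤ M.cycles.card + N.cycles.card + 3 :=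
        Nat.add_le_add (Finset.card_union_le _ _) (Finset.card_image_le.trans (by simp))
  have := M.card_cycles_add_two_le
  have := N.card_cycles_add_two_le
  have := Set.ncard_add_ncard_compl S
  omega

end CutSideDecomposition

namespace IsThreeEdgeCut

variable {V : Type*} {G : SimpleGraph V} {X : Set V} {c o : Fin 3 → V} {D : Finset (List V)}
  {q : V → List V} {σ : Equiv.Perm (Fin 3)}

theorem eq_of_cons_eq (hq : ∀ x ∈ Set.range c, o 0 :: q x ∈ D ∧ (q x).head? = some x)
    {x x' : V} (hx : x ∈ Set.range c) (hx' : x' ∈ Set.range c) (h : o 0 :: q x = o 0 :: q x') :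
    x = x' := by
  have := congrArg List.head? (List.cons.inj h).2
  rwa [(hq x hx).2, (hq x' hx').2, Option.some.injEq] at this

theorem exists_eq_cons_of_mem (hX : IsThreeEdgeCut G X c o)
    (hD : IsOCDC (sideGraph G X (o 0) (Set.range c)) D)
    (hcons : ∀ l ∈ D, o 0 ∈ l → ∃ r, l = o 0 :: r)
    (hq : ∀ x ∈ Set.range c, o 0 :: q x ∈ D ∧ (q x).head? = some x) {l : List V}
    (hl : l ∈ D) (hyl : o 0 ∈ l) : ∃ i, l = o 0 :: q (c i) := by
  obtain ⟨r, rfl⟩ := hcons l hl hyl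
  have hr : r ≠ [] := by rintro rfl; simpa using (hD.1 _ hl).1
  obtain ⟨x, hx⟩ := Option.ne_none_iff_exists'.1 (List.head?_eq_none_iff.not.2 hr)
  have hyx := mem_cycleArcs_cons_of_head? (y := o 0) hx
  obtain ⟨i, rfl⟩ := mem_of_sideGraph_adj_left (hX.right_notMem 0) ((hD.1 _ hl).2.2 _ hyx)
  exact ⟨i, hD.eq_of_mem_cycleArcs hl (hq _ ⟨i, rfl⟩).1 hyx
    (mem_cycleArcs_cons_of_head? (hq _ ⟨i, rfl⟩).2)⟩

variable [DecidableEq V]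

theorem card_filter_notMem_add_ncard_le
    (hq : ∀ x ∈ Set.range c, o 0 :: q x ∈ D ∧ (q x).head? = some x) :
    (D.filter (o 0 ∉ ·)).card + (Set.range c).ncard ≤ D.card := by
  have : (Set.range c).ncard ≤ (D.filter (o 0 ∈ ·)).card := by
    rw [← Set.ncard_coe_finset]
    refine Set.ncard_le_ncard_of_injOn (fun x => o 0 :: q x) (fun x hx => ?_)
      (fun x hx x' hx' h => eq_of_cons_eq hq hx hx' h)
    simpa using (hq x hx).1
  have := Finset.card_filter_add_card_filter_not (s := D) (fun l => o 0 ∈ l)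
  omega

/-- `q x` stands for the cycle of the cover through the arc `(o 0, x)`, with `o 0` removed. -/
def cutPath (c : Fin 3 → V) (σ : Equiv.Perm (Fin 3)) (q : V → List V) (m : Fin 3) : List V :=
  if c m = c (σ m) then [c m] else q (c m)

theorem mem_consecutivePairs_cutPath {m : Fin 3} {u v : V}
    (h : (u, v) ∈ (cutPath c σ q m).consecutivePairs) :
    c m ≠ c (σ m) ∧ (u, v) ∈ (q (c m)).consecutivePairs := by
  unfold cutPath at h
  split_ifs at h with hm
  · simp at h
  · exact ⟨hm, h⟩

theorem exists_mem_cutPath_or_cycle (hG : TwoConnected G) (hX : IsThreeEdgeCut G X c o)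
    (hXnt : X.Nontrivial) (hD : IsOCDC (sideGraph G X (o 0) (Set.range c)) D)
    (hcons : ∀ l ∈ D, o 0 ∈ l → ∃ r, l = o 0 :: r)
    (hq : ∀ x ∈ Set.range c, o 0 :: q x ∈ D ∧ (q x).head? = some x)
    (hσ : ∀ i, σ i ≠ i) {u v : V} (huv : G.Adj u v) (hu : u ∈ X) (hv : v ∈ X) :
    (∃ m, (u, v) ∈ (cutPath c σ q m).consecutivePairs) ∨
      ∃ l ∈ D.filter (o 0 ∉ ·), (u, v) ∈ cycleArcs l := by
  have hy := hX.right_notMem 0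
  obtain ⟨L, ⟨hL, huvL⟩, -⟩ := hD.2 u v ((sideGraph_adj_iff_of_mem hy hu hv).2 huv)
  by_cases hyL : o 0 ∈ L
  · obtain ⟨i, rfl⟩ := hX.exists_eq_cons_of_mem hD hcons hq hL hyL
    obtain ⟨m, hmi, hm⟩ := exists_apply_eq_and_apply_perm_ne hσ (hX.range_nontrivial hG hXnt) i
    refine Or.inl ⟨m, ?_⟩
    rw [cutPath, if_neg hm, hmi]
    exact (mem_cycleArcs_cons_iff_of_ne (y := o 0) (fun h => hy (h ▸ hu))
      (fun h => hy (h ▸ hv))).1 huvL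
  · exact Or.inr ⟨L, Finset.mem_filter.2 ⟨hL, hyL⟩, huvL⟩

theorem cutPath_unique (hD : IsOCDC (sideGraph G X (o 0) (Set.range c)) D)
    (hq : ∀ x ∈ Set.range c, o 0 :: q x ∈ D ∧ (q x).head? = some x)
    (hσ : ∀ i, σ i ≠ i) {u v : V} {i j : Fin 3}
    (hi : (u, v) ∈ (cutPath c σ q i).consecutivePairs)
    (hj : (u, v) ∈ (cutPath c σ q j).consecutivePairs) : i = j := by
  obtain ⟨hi', hi⟩ := mem_consecutivePairs_cutPath hi
  obtain ⟨hj', hj⟩ := mem_consecutivePairs_cutPath hj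
  have := hD.eq_of_mem_cycleArcs (hq _ ⟨i, rfl⟩).1 (hq _ ⟨j, rfl⟩).1
    (mem_cycleArcs_cons_of_mem_consecutivePairs hi)
    (mem_cycleArcs_cons_of_mem_consecutivePairs hj)
  exact eq_of_apply_eq_of_apply_perm_ne hσ
    (eq_of_cons_eq hq ⟨i, rfl⟩ ⟨j, rfl⟩ this) hi' hj'

theorem nonempty_cutSideDecomposition (hG : TwoConnected G) (hX : IsThreeEdgeCut G X c o)
    (hXnt : X.Nontrivial) (hD : IsOCDC (sideGraph G X (o 0) (Set.range c)) D)
    (hcons : ∀ l ∈ D, o 0 ∈ l → ∃ r, l = o 0 :: r)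
    (hcard : D.card + 2 ≤ X.ncard + (Set.range c).ncard)
    (hq : ∀ x ∈ Set.range c, o 0 :: q x ∈ D ∧ (q x).head? = some x)
    (hσ : ∀ i, σ i ≠ i)
    (hend : ∀ m, c m ≠ c (σ m) → (q (c m)).getLast? = some (c (σ m))) :
    Nonempty (CutSideDecomposition G X c σ) := by
  have hcycle (m : Fin 3) := hD.1 _ (hq _ ⟨m, rfl⟩).1
  refine ⟨{
    path := cutPath c σ q
    cycles := D.filter (o 0 ∉ ·)
    isDirPath_path := fun m => ?_
    head?_path := fun m => ?_
    getLast?_path := fun m => ?_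
    path_subset := fun m x hx => ?_
    isDirCycle_of_mem := fun l hl =>
      (hD.1 l (Finset.mem_filter.1 hl).1).of_sideGraph (Finset.mem_filter.1 hl).2
    cycle_subset := fun l hl x hx => (hD.1 l (Finset.mem_filter.1 hl).1).mem_of_sideGraph
      hX.range_subset hx fun h => (Finset.mem_filter.1 hl).2 (h ▸ hx)
    exists_mem_of_adj := fun u v huv hu hv =>
      exists_mem_cutPath_or_cycle hG hX hXnt hD hcons hq hσ huv hu hv
    path_unique := cutPath_unique hD hq hσ
    notMem_cycleArcs := fun hl hi hl' => ?_
    cycle_unique := fun hl hl' => hD.eq_of_mem_cycleArcs (Finset.mem_filter.1 hl).1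
      (Finset.mem_filter.1 hl').1
    card_cycles_add_two_le := by have := card_filter_notMem_add_ncard_le hq; omega }⟩
  · unfold cutPath
    split_ifs
    exacts [⟨by simp, List.nodup_singleton _, List.isChain_singleton _⟩,
      (hcycle m).isDirPath_of_cons_sideGraph]
  · unfold cutPath
    split_ifs
    exacts [rfl, (hq _ ⟨m, rfl⟩).2]
  · unfold cutPath
    split_ifs with h
    exacts [by simp [h], hend m h]
  · unfold cutPath at hx
    split_ifs at hx
    · rw [List.mem_singleton.1 hx]
      exact hX.left_mem m
    · exact (hcycle m).mem_of_sideGraph hX.range_subset (List.mem_cons_of_mem _ hx)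
        fun h => (List.nodup_cons.1 (hcycle m).2.1).1 (h ▸ hx)
  · obtain ⟨-, hi⟩ := mem_consecutivePairs_cutPath hi
    have := hD.eq_of_mem_cycleArcs (Finset.mem_filter.1 hl).1 (hq _ ⟨_, rfl⟩).1 hl'
      (mem_cycleArcs_cons_of_mem_consecutivePairs hi)
    exact (Finset.mem_filter.1 hl).2 (this ▸ List.mem_cons_self)

theorem exists_cons_detours (hX : IsThreeEdgeCut G X c o)
    (hD : IsOCDC (sideGraph G X (o 0) (Set.range c)) D) :
    ∃ (D' : Finset (List V)) (q : V → List V), IsOCDC (sideGraph G X (o 0) (Set.range c)) D' ∧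
      D'.card ≤ D.card ∧ (∀ l ∈ D', o 0 ∈ l → ∃ r, l = o 0 :: r) ∧
      ∀ x ∈ Set.range c, o 0 :: q x ∈ D' ∧ (q x).head? = some x := by
  have hy := hX.right_notMem 0
  obtain ⟨D', hD', hcard', hcons⟩ := hD.exists_cons_of_mem (o 0)
  have (x : V) : ∃ r, x ∈ Set.range c → o 0 :: r ∈ D' ∧ r.head? = some x := by
    by_cases hx : x ∈ Set.range c
    · obtain ⟨L, ⟨hL, hyx⟩, -⟩ := hD'.2 _ _ (sideGraph_adj_of_mem (G := G) (X := X) hx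
        fun h => hy (h ▸ hX.range_subset hx))
      obtain ⟨r, rfl⟩ := hcons L hL (fst_mem_of_mem_cycleArcs hyx)
      have hr : r ≠ [] := by rintro rfl; simpa using (hD'.1 _ hL).1
      exact ⟨r, fun _ => ⟨hL, head?_eq_of_mem_cycleArcs_cons hr
        (List.nodup_cons.1 (hD'.1 _ hL).2.1).1 hyx⟩⟩
    · exact ⟨[], fun h => absurd h hx⟩
  choose q hq using this
  exact ⟨D', q, hD', hcard', hcons, hq⟩

theorem exists_cutSideDecomposition (hG : TwoConnected G) (hX : IsThreeEdgeCut G X c o)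
    (hXnt : X.Nontrivial) (hD : IsOCDC (sideGraph G X (o 0) (Set.range c)) D)
    (hcard : D.card + 2 ≤ X.ncard + (Set.range c).ncard) :
    ∃ σ : Equiv.Perm (Fin 3), (∀ i, σ i ≠ i) ∧
      Nonempty (CutSideDecomposition G X c σ) := by
  obtain ⟨D', q, hD', hcard', hcons, hq⟩ := hX.exists_cons_detours hD
  have hcard'' : D'.card + 2 ≤ X.ncard + (Set.range c).ncard := by omega
  have hlast (m : Fin 3) :=
    (hD'.1 _ (hq _ ⟨m, rfl⟩).1).exists_getLast?_of_cons_sideGraph (hX.right_notMem 0)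
  by_cases hinj : Function.Injective c
  · choose a ha hlast hne using hlast
    choose π hπ using ha
    have hπ_ne (i : Fin 3) : c (π i) ≠ c i :=
      fun h => hne i (by rw [(hq _ ⟨i, rfl⟩).2, ← hπ, h])
    -- cycles through `o 0` ending with the same arc coincide
    have hπ_inj : Function.Injective π := fun i j hij =>
      hinj <| eq_of_cons_eq hq ⟨i, rfl⟩ ⟨j, rfl⟩ <|
        hD'.eq_of_mem_cycleArcs (hq _ ⟨i, rfl⟩).1 (hq _ ⟨j, rfl⟩).1
          (mem_cycleArcs_cons_of_getLast? (hlast i)) (by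
            rw [← hπ, hij, hπ]
            exact mem_cycleArcs_cons_of_getLast? (hlast j))
    let σ := Equiv.ofBijective π (Finite.injective_iff_bijective.1 hπ_inj)
    refine ⟨σ, fun i h => hπ_ne i (congrArg c h), ?_⟩
    exact hX.nonempty_cutSideDecomposition hG hXnt hD' hcons hcard'' hq
      (fun i h => hπ_ne i (congrArg c h)) fun m _ => by rw [hlast, ← hπ]; rfl
  · refine ⟨finRotate 3, by decide, hX.nonempty_cutSideDecomposition hG hXnt hD' hcons hcard''
      hq (by decide) fun m hm => ?_⟩
    obtain ⟨_, ⟨j, rfl⟩, hjm, hne⟩ := hlast m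
    have hjm' : c j ≠ c m := fun h => hne (by rw [(hq _ ⟨m, rfl⟩).2, h])
    rw [hjm, apply_eq_of_not_injective hinj hjm' (Ne.symm hm)]

end IsThreeEdgeCut

theorem hasSOCDC_of_cutSideDecomposition {V : Type*} [Finite V] [DecidableEq V]
    {G : SimpleGraph V} {S : Set V} {a b : Fin 3 → V} (hS : IsThreeEdgeCut G S a b)
    {σ τ : Equiv.Perm (Fin 3)} (hσ : ∀ i, σ i ≠ i) (hτ : ∀ i, τ i ≠ i)
    (M : CutSideDecomposition G S a σ) (N : CutSideDecomposition G Sᶜ b τ) : HasSOCDC G := by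
  rcases perm_fin_three_eq_inv_or_eq σ τ hσ hτ with rfl | rfl
  · exact ⟨_, M.isOCDC_glueCycles N hS hσ, by have := M.card_glueCycles_le N; omega⟩
  · exact ⟨_, M.isOCDC_glueCycles N.reverse hS hσ,
      by have := M.card_glueCycles_le N.reverse; omega⟩

/-- A minimal counterexample to the SOCDC conjecture has no non-trivial edge cut of
size `3`: if exactly three edges cross a nontrivial vertex bipartition `(S, Sᶜ)`, then
one of the two sides is a single vertex. -/
theorem no_nontrivial_three_edge_cut_of_minimalCounterexample {V : Type} [Finite V]
    (G : SimpleGraph V) (h : MinimalCounterexample G) :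
    ∀ S : Set V, S.Nonempty → Sᶜ.Nonempty → (crossingEdges G S).ncard = 3 →
      (∃ w : V, S = {w}) ∨ (∃ w : V, Sᶜ = {w}) := by
  classical
  intro S hS hSc hcut
  refine hS.exists_eq_singleton_or_nontrivial.imp_right fun hSnt => ?_
  refine hSc.exists_eq_singleton_or_nontrivial.resolve_right fun hScnt => h.2.2.2.1 ?_
  obtain ⟨a, b, hab⟩ := exists_isThreeEdgeCut hcut
  obtain ⟨DS, hDS, hDS_card⟩ := hab.exists_isOCDC_sideGraph h hSnt hScnt
  obtain ⟨DY, hDY, hDY_card⟩ := hab.compl.exists_isOCDC_sideGraph h hScnt (by rwa [compl_compl])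
  obtain ⟨σ, hσ, ⟨M⟩⟩ := hab.exists_cutSideDecomposition h.1 hSnt hDS hDS_card
  obtain ⟨τ, hτ, ⟨N⟩⟩ := hab.compl.exists_cutSideDecomposition h.1 hScnt hDY hDY_card
  exact hasSOCDC_of_cutSideDecomposition hab hσ hτ M N
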